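/- (Difference-Derivative Inequality) Let Ω > 0 and let f : ℝ → ℝ be Ω-bandlimited. Then for every sampling interval T > 0, every L ∈ ℕ with L ≥ 1, and every k ∈ ℤ, the L-th order finite difference of the sample sequence a[k] = f(kT) satisfies |(Δ^L a)[k]| ≤ (TΩe)^L · sup_{t ∈ ℝ} |f(t)|, where e is Euler's number. -/

import Mathlib

/-! The inverse Fourier integral of `𝓕f`, which is supported in `[-Ω/2π, Ω/2π]`, extends `f`
to an entire function `F` of exponential type: `‖F z‖ ≤ A e^{Ω |Im z|}`. Phragmén–Lindelöf in
the upper and lower half-planes improves `A` to `M = sup |f|`, and Cauchy's estimate on the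
circle of radius `1/Ω` about a real point gives `|f'| ≤ e Ω M`, hence
`|f (x + T) - f x| ≤ T Ω e M`. Since `f (· + T) - f` is again `Ω`-bandlimited and its samples
are the first differences of those of `f`, induction on `L` gives the bound. -/

open MeasureTheory

/-- `f : ℝ → ℝ` is `Ω`-bandlimited (`Ω` in rad/s): continuous, integrable and bounded,
with Fourier transform `𝓕f(ξ) = ∫ f(t) e^{−2πiξt} dt` vanishing for `|ξ| > Ω/(2π)`. -/
def IsBandlimited (Ω : ℝ) (f : ℝ → ℝ) : Prop :=
  Continuous f ∧ Integrable f ∧ (∃ C : ℝ, ∀ t : ℝ, |f t| ≤ C) ∧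
    ∀ ξ : ℝ, Ω / (2 * Real.pi) < |ξ| →
      FourierTransform.fourier (fun t : ℝ => (f t : ℂ)) ξ = 0

/-- First-order finite difference: `(Δa)[k] = a[k+1] − a[k]`. -/
def fdiff (a : ℤ → ℝ) : ℤ → ℝ := fun k => a (k + 1) - a k

open Complex Real Set Filter Metric FourierTransform

section ExponentialType

variable {F : ℂ → ℂ} {A M c : ℝ}

theorem norm_le_mul_exp_im_of_bounded_on_real_of_im_nonneg (hF : Differentiable ℂ F)
    (hgrowth : ∀ z, ‖F z‖ ≤ A * rexp (c * |z.im|)) (hreal : ∀ t : ℝ, ‖F t‖ ≤ M) {z : ℂ}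
    (hz : 0 ≤ z.im) : ‖F z‖ ≤ M * rexp (c * z.im) := by
  -- `G` is bounded by `A` on the right half-plane and by `M` on the imaginary axis.
  set G : ℂ → ℂ := fun w => cexp (-c * w) * F (I * w)
  have hG : Differentiable ℂ G := by fun_prop
  have hG_le : ∀ w : ℂ, 0 ≤ w.re → ‖G w‖ ≤ A := fun w hw => by
    have := hgrowth (I * w)
    simp only [mul_im, I_re, I_im, zero_mul, one_mul, zero_add, abs_of_nonneg hw] at this
    calc ‖G w‖ = rexp (-(c * w.re)) * ‖F (I * w)‖ := by simp [G, norm_exp]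
      _ ≤ rexp (-(c * w.re)) * (A * rexp (c * w.re)) := by gcongr
      _ = A := by rw [mul_left_comm, ← Real.exp_add, neg_add_cancel, Real.exp_zero, mul_one]
  have key : ‖G (-I * z)‖ ≤ M := by
    refine PhragmenLindelof.right_half_plane_of_bounded_on_real hG.diffContOnCl
      ⟨1, one_lt_two, 0, ?_⟩ ⟨A, eventually_map.2 ?_⟩ (fun t => ?_) (by simpa using hz)
    · refine Asymptotics.IsBigO.of_bound A (eventually_inf_principal.2 (.of_forall fun w hw => ?_))
      simpa using hG_le w (le_of_lt hw)
    · filter_upwards [eventually_ge_atTop 0] with t ht using hG_le t (by simpa using ht)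
    · have : I * (t * I) = ((-t : ℝ) : ℂ) := by push_cast; ring_nf; simp
      simpa [G, this, norm_exp] using hreal (-t)
  have hGz : ‖G (-I * z)‖ = rexp (-(c * z.im)) * ‖F z‖ := by
    have hIz : I * (-I * z) = z := by rw [← mul_assoc, mul_neg, I_mul_I, neg_neg, one_mul]
    simp only [G, hIz, norm_mul, norm_exp]
    simp
  rw [hGz, ← le_div_iff₀' (Real.exp_pos _), Real.exp_neg, div_inv_eq_mul] at key
  exact key

theorem norm_le_mul_exp_abs_im_of_bounded_on_real (hF : Differentiable ℂ F)
    (hgrowth : ∀ z, ‖F z‖ ≤ A * rexp (c * |z.im|)) (hreal : ∀ t : ℝ, ‖F t‖ ≤ M) (z : ℂ) :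
    ‖F z‖ ≤ M * rexp (c * |z.im|) := by
  rcases le_or_gt 0 z.im with hz | hz
  · rw [abs_of_nonneg hz]
    exact norm_le_mul_exp_im_of_bounded_on_real_of_im_nonneg hF hgrowth hreal hz
  · have hF_neg : Differentiable ℂ fun w => F (-w) := by fun_prop
    have := norm_le_mul_exp_im_of_bounded_on_real_of_im_nonneg hF_neg
      (fun w => by simpa using hgrowth (-w)) (fun t => by simpa using hreal (-t))
      (z := -z) (by simpa using hz.le)
    simpa [abs_of_neg hz] using this

theorem norm_deriv_ofReal_le (hc : 0 < c) (hF : Differentiable ℂ F)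
    (hbound : ∀ z, ‖F z‖ ≤ M * rexp (c * |z.im|)) (t : ℝ) :
    ‖deriv F t‖ ≤ M * rexp 1 * c := by
  have hM : 0 ≤ M := nonneg_of_mul_nonneg_left ((norm_nonneg _).trans (hbound 0)) (Real.exp_pos _)
  have hsphere : ∀ z ∈ sphere (t : ℂ) c⁻¹, ‖F z‖ ≤ M * rexp 1 := fun z hz => by
    have him : |z.im| ≤ c⁻¹ := by
      simpa [mem_sphere_iff_norm] using (abs_im_le_norm (z - t)).trans_eq (mem_sphere_iff_norm.1 hz)
    refine (hbound z).trans (by gcongr; exact (le_inv_mul_iff₀ hc).1 (by rwa [mul_one]))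
  simpa using norm_deriv_le_of_forall_mem_sphere_norm_le (inv_pos.2 hc) hF.diffContOnCl hsphere

theorem norm_sub_ofReal_le (hc : 0 < c) (hF : Differentiable ℂ F)
    (hbound : ∀ z, ‖F z‖ ≤ M * rexp (c * |z.im|)) (x T : ℝ) :
    ‖F ↑(x + T) - F x‖ ≤ M * rexp 1 * c * |T| := by
  have hderiv (s : ℝ) : HasDerivWithinAt (fun s : ℝ => F s) (deriv F s) univ s :=
    (hF s).hasDerivAt.comp_ofReal.hasDerivWithinAt
  simpa using convex_univ.norm_image_sub_le_of_norm_hasDerivWithin_le (fun s _ => hderiv s)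
    (fun s _ => norm_deriv_ofReal_le hc hF hbound s) (mem_univ x) (mem_univ (x + T))

end ExponentialType

section FourierExtension

variable {φ : ℝ → ℂ} {W : ℝ}

noncomputable def fourierInvExtension (φ : ℝ → ℂ) (z : ℂ) : ℂ :=
  ∫ ξ : ℝ, cexp (2 * π * ξ * I * z) * φ ξ

theorem fourierInvExtension_ofReal (φ : ℝ → ℂ) (t : ℝ) :
    fourierInvExtension φ t = 𝓕⁻ φ t := by
  rw [Real.fourierInv_eq']
  refine integral_congr_ae (.of_forall fun ξ => ?_)
  simp only [Real.inner_apply, smul_eq_mul]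
  push_cast
  ring_nf

theorem norm_cexp_two_pi_mul_I_le {ξ : ℝ} (hξ : |ξ| ≤ W) (z : ℂ) :
    ‖cexp (2 * π * ξ * I * z)‖ ≤ rexp (2 * π * W * |z.im|) := by
  rw [norm_exp, Real.exp_le_exp]
  have hre : (2 * π * ξ * I * z).re = -(2 * π * ξ * z.im) := by simp [mul_re, mul_im]
  calc (2 * π * ξ * I * z).re ≤ |2 * π * ξ * z.im| := hre ▸ neg_le_abs _
    _ = 2 * π * |ξ| * |z.im| := by rw [abs_mul, abs_mul, abs_of_pos two_pi_pos]
    _ ≤ 2 * π * W * |z.im| := by gcongr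

theorem norm_cexp_two_pi_mul_I_mul_le (hW : Function.support φ ⊆ Icc (-W) W) (ξ : ℝ) (z : ℂ) :
    ‖cexp (2 * π * ξ * I * z) * φ ξ‖ ≤ rexp (2 * π * W * |z.im|) * ‖φ ξ‖ := by
  by_cases hξ : φ ξ = 0
  · simp [hξ]
  rw [norm_mul]
  gcongr
  exact norm_cexp_two_pi_mul_I_le (abs_le.2 (hW hξ)) z

theorem norm_two_pi_mul_I_mul_cexp_mul_le (hW : Function.support φ ⊆ Icc (-W) W) (ξ : ℝ)
    {z₀ z : ℂ} (hz : z ∈ ball z₀ 1) :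
    ‖2 * π * ξ * I * cexp (2 * π * ξ * I * z) * φ ξ‖ ≤
      2 * π * W * rexp (2 * π * W * (|z₀.im| + 1)) * ‖φ ξ‖ := by
  by_cases hξ : φ ξ = 0
  · simp [hξ]
  have hξW : |ξ| ≤ W := abs_le.2 (hW hξ)
  have hW0 : 0 ≤ W := (abs_nonneg ξ).trans hξW
  have him : |z.im| ≤ |z₀.im| + 1 := by
    have := (abs_im_le_norm (z - z₀)).trans (mem_ball_iff_norm.1 hz).le
    rw [sub_im] at this
    linarith [abs_sub_abs_le_abs_sub z.im z₀.im]
  calc ‖2 * π * ξ * I * cexp (2 * π * ξ * I * z) * φ ξ‖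
      = ‖(2 * π * ξ * I : ℂ)‖ * ‖cexp (2 * π * ξ * I * z) * φ ξ‖ := by rw [mul_assoc, norm_mul]
    _ ≤ (2 * π * W) * (rexp (2 * π * W * (|z₀.im| + 1)) * ‖φ ξ‖) := by
      gcongr
      · simpa [abs_of_pos pi_pos] using mul_le_mul_of_nonneg_left hξW two_pi_pos.le
      · exact (norm_cexp_two_pi_mul_I_mul_le hW ξ z).trans (by gcongr)
    _ = 2 * π * W * rexp (2 * π * W * (|z₀.im| + 1)) * ‖φ ξ‖ := by ring

theorem norm_fourierInvExtension_le (hφ : Integrable φ) (hW : Function.support φ ⊆ Icc (-W) W)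
    (z : ℂ) :
    ‖fourierInvExtension φ z‖ ≤ (∫ ξ, ‖φ ξ‖) * rexp (2 * π * W * |z.im|) := by
  rw [← integral_mul_const]
  refine norm_integral_le_of_norm_le (hφ.norm.mul_const _) (.of_forall fun ξ => ?_)
  rw [mul_comm ‖φ ξ‖]
  exact norm_cexp_two_pi_mul_I_mul_le hW ξ z

theorem differentiable_fourierInvExtension (hφ : Integrable φ)
    (hW : Function.support φ ⊆ Icc (-W) W) : Differentiable ℂ (fourierInvExtension φ) := by
  intro z₀
  have hmeas (z : ℂ) : AEStronglyMeasurable fun ξ : ℝ => cexp (2 * π * ξ * I * z) * φ ξ :=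
    (by fun_prop : Continuous fun ξ : ℝ => cexp (2 * π * ξ * I * z)).aestronglyMeasurable.mul
      hφ.aestronglyMeasurable
  have hint : Integrable fun ξ : ℝ => cexp (2 * π * ξ * I * z₀) * φ ξ :=
    (hφ.norm.const_mul _).mono' (hmeas z₀) (.of_forall (norm_cexp_two_pi_mul_I_mul_le hW · z₀))
  have hmeas' : AEStronglyMeasurable
      fun ξ : ℝ => 2 * π * ξ * I * cexp (2 * π * ξ * I * z₀) * φ ξ :=
    (by fun_prop : Continuous fun ξ : ℝ => 2 * π * ξ * I * cexp (2 * π * ξ * I * z₀)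
      ).aestronglyMeasurable.mul hφ.aestronglyMeasurable
  have hderiv (ξ : ℝ) (z : ℂ) : HasDerivAt (fun z => cexp (2 * π * ξ * I * z) * φ ξ)
      (2 * π * ξ * I * cexp (2 * π * ξ * I * z) * φ ξ) z := by
    simpa [mul_comm] using ((hasDerivAt_id z).const_mul (2 * π * ξ * I)).cexp.mul_const (φ ξ)
  exact (hasDerivAt_integral_of_dominated_loc_of_deriv_le (ball_mem_nhds z₀ one_pos)
    (.of_forall hmeas) hint hmeas'
    (.of_forall fun ξ _ hz => norm_two_pi_mul_I_mul_cexp_mul_le hW ξ hz) (hφ.norm.const_mul _)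
    (.of_forall fun ξ z _ => hderiv ξ z)).2.differentiableAt

end FourierExtension

namespace IsBandlimited

variable {Ω : ℝ} {f g : ℝ → ℝ}

theorem bddAbove_range_abs (hf : IsBandlimited Ω f) : BddAbove (range fun t => |f t|) := by
  obtain ⟨-, -, ⟨C, hC⟩, -⟩ := hf
  exact ⟨C, by rintro _ ⟨t, rfl⟩; exact hC t⟩

theorem abs_le_iSup (hf : IsBandlimited Ω f) (t : ℝ) : |f t| ≤ ⨆ s, |f s| :=
  le_ciSup hf.bddAbove_range_abs t

theorem comp_add_right (hf : IsBandlimited Ω f) (T : ℝ) : IsBandlimited Ω fun t => f (t + T) := by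
  obtain ⟨hcont, hint, ⟨C, hC⟩, hvanish⟩ := hf
  refine ⟨hcont.comp (continuous_add_const T), hint.comp_add_right T, ⟨C, fun t => hC _⟩,
    fun ξ hξ => ?_⟩
  exact (congrFun (VectorFourier.fourierIntegral_comp_add_right 𝐞 volume (innerₗ ℝ)
    (fun t : ℝ => (f t : ℂ)) T) ξ).trans ((congrArg _ (hvanish ξ hξ)).trans (smul_zero _))

theorem sub (hf : IsBandlimited Ω f) (hg : IsBandlimited Ω g) :
    IsBandlimited Ω fun t => f t - g t := by
  obtain ⟨hf_cont, hf_int, ⟨C, hC⟩, hf_vanish⟩ := hf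
  obtain ⟨hg_cont, hg_int, ⟨D, hD⟩, hg_vanish⟩ := hg
  refine ⟨hf_cont.sub hg_cont, hf_int.sub hg_int, ⟨C + D, fun t => ?_⟩, fun ξ hξ => ?_⟩
  · exact (abs_sub _ _).trans (add_le_add (hC t) (hD t))
  · have hf0 := hf_vanish ξ hξ
    have hg0 := hg_vanish ξ hξ
    rw [Real.fourier_eq] at hf0 hg0 ⊢
    simp only [ofReal_sub, smul_sub]
    rw [integral_sub ((Real.fourierIntegral_convergent_iff ξ).2 hf_int.ofReal)
      ((Real.fourierIntegral_convergent_iff ξ).2 hg_int.ofReal), hf0, hg0, sub_zero]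

theorem exists_differentiable_extension (hf : IsBandlimited Ω f) :
    ∃ F : ℂ → ℂ, Differentiable ℂ F ∧ (∀ t : ℝ, F t = f t) ∧
      ∃ A, ∀ z, ‖F z‖ ≤ A * rexp (Ω * |z.im|) := by
  obtain ⟨hcont, hint, -, hvanish⟩ := hf
  set φ := 𝓕 fun t : ℝ => (f t : ℂ)
  have hsupp : Function.support φ ⊆ Icc (-(Ω / (2 * π))) (Ω / (2 * π)) := fun ξ hξ =>
    abs_le.1 (not_lt.1 fun h => hξ (hvanish ξ h))
  have hφ_cont : Continuous φ :=
    VectorFourier.fourierIntegral_continuous continuous_fourierChar continuous_inner hint.ofReal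
  have hφ : Integrable φ :=
    hφ_cont.integrable_of_hasCompactSupport (.of_support_subset_isCompact isCompact_Icc hsupp)
  have hΩ : 2 * π * (Ω / (2 * π)) = Ω := mul_div_cancel₀ Ω two_pi_pos.ne'
  refine ⟨fourierInvExtension φ, differentiable_fourierInvExtension hφ hsupp, fun t => ?_,
    _, fun z => hΩ ▸ norm_fourierInvExtension_le hφ hsupp z⟩
  rw [fourierInvExtension_ofReal]
  exact hint.ofReal.fourierInv_fourier_eq hφ (continuous_ofReal.comp hcont).continuousAt

theorem abs_sub_le (hΩ : 0 < Ω) (hf : IsBandlimited Ω f) (x T : ℝ) :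
    |f (x + T) - f x| ≤ |T| * Ω * rexp 1 * ⨆ t, |f t| := by
  obtain ⟨F, hF, hF_real, A, hgrowth⟩ := hf.exists_differentiable_extension
  have hbound := norm_le_mul_exp_abs_im_of_bounded_on_real hF hgrowth
    (M := ⨆ t, |f t|) fun t => by simpa [hF_real] using hf.abs_le_iSup t
  have := norm_sub_ofReal_le hΩ hF hbound x T
  rw [hF_real, hF_real, ← ofReal_sub, norm_real, Real.norm_eq_abs] at this
  linarith

end IsBandlimited

theorem fdiff_samples (f : ℝ → ℝ) (T : ℝ) :
    fdiff (fun j : ℤ => f (j * T)) = fun j : ℤ => f (j * T + T) - f (j * T) := by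
  ext j
  simp [fdiff, add_mul]

theorem fdiff_iterate_samples_le_general (Ω : ℝ) (hΩ : 0 < Ω) (f : ℝ → ℝ)
    (hf : IsBandlimited Ω f) (T : ℝ) (hT : 0 < T) (L : ℕ) (k : ℤ) :
    |fdiff^[L] (fun j : ℤ => f (j * T)) k| ≤
      (T * Ω * Real.exp 1) ^ L * ⨆ t : ℝ, |f t| := by
  induction L generalizing f with
  | zero => simpa using hf.abs_le_iSup (k * T)
  | succ L ih =>
    have hg : IsBandlimited Ω fun t => f (t + T) - f t := (hf.comp_add_right T).sub hf
    have hsup : ⨆ t, |f (t + T) - f t| ≤ T * Ω * rexp 1 * ⨆ t, |f t| :=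
      ciSup_le fun t => (hf.abs_sub_le hΩ t T).trans_eq (by rw [abs_of_pos hT])
    rw [Function.iterate_succ_apply, fdiff_samples, pow_succ, mul_assoc]
    exact (ih _ hg).trans (by gcongr)

/-- Difference-Derivative Inequality. -/
theorem fdiff_iterate_samples_le (Ω : ℝ) (hΩ : 0 < Ω) (f : ℝ → ℝ)
    (hf : IsBandlimited Ω f) (T : ℝ) (hT : 0 < T) (L : ℕ) (hL : 1 ≤ L) (k : ℤ) :
    |fdiff^[L] (fun j : ℤ => f (j * T)) k| ≤
      (T * Ω * Real.exp 1) ^ L * ⨆ t : ℝ, |f t| :=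
  fdiff_iterate_samples_le_general Ω hΩ f hf T hT L k
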